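/- Let v = (v₁, v₂) : ℝ² → ℝ² be smooth with compact support, and let 𝒟v := (∂₁v₁, ∂₂v₂, ∂₂v₁ + ∂₁v₂). Then ∫_{ℝ²} (‖∇v₁‖² + ‖∇v₂‖²) dx ≤ 2·∫_{ℝ²} ‖𝒟v‖² dx. -/

import Mathlib

open MeasureTheory

/-- The plane `ℝ²` with the Euclidean norm and Lebesgue measure. -/
abbrev E2 : Type := EuclideanSpace ℝ (Fin 2)

/-- Partial derivative of `f : ℝ² → ℝ` in the `i`-th coordinate direction. -/
noncomputable def pd (i : Fin 2) (f : E2 → ℝ) (x : E2) : ℝ :=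
  fderiv ℝ f x (EuclideanSpace.single i 1)

lemma pd_cont (i : Fin 2) {f : E2 → ℝ} (hf : ContDiff ℝ (⊤ : ℕ∞) f) : Continuous (pd i f) :=
  (hf.continuous_fderiv (by simp)).clm_apply continuous_const

lemma pd_supp (i : Fin 2) {f : E2 → ℝ} (hf : HasCompactSupport f) :
    HasCompactSupport (pd i f) := by
  have h2 : HasCompactSupport (fderiv ℝ f) := HasCompactSupport.fderiv (𝕜 := ℝ) hf
  exact h2.comp_left (g := fun L : E2 →L[ℝ] ℝ => L (EuclideanSpace.single i 1)) rfl

lemma pd_smooth (i : Fin 2) {f : E2 → ℝ} (hf : ContDiff ℝ (⊤ : ℕ∞) f) : ContDiff ℝ (⊤ : ℕ∞) (pd i f) :=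
  (hf.fderiv_right (by simp)).clm_apply contDiff_const

lemma integ_mul {φ ψ : E2 → ℝ} (hφ : Continuous φ) (hψ : Continuous ψ)
    (h : HasCompactSupport ψ) : Integrable (fun x => φ x * ψ x) :=
  (hφ.mul hψ).integrable_of_hasCompactSupport h.mul_left

/-- Integration by parts twice: `∫ ∂₂f ∂₁g = ∫ ∂₁f ∂₂g`. -/
lemma pd_comm_integral {f g : E2 → ℝ} (hf : ContDiff ℝ (⊤ : ℕ∞) f) (hg : ContDiff ℝ (⊤ : ℕ∞) g)
    (hfs : HasCompactSupport f) (hgs : HasCompactSupport g) :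
    ∫ x, pd 1 f x * pd 0 g x = ∫ x, pd 0 f x * pd 1 g x := by
  have hdf : ∀ y, DifferentiableAt ℝ (fderiv ℝ f) y :=
    fun y => ((hf.fderiv_right (m := (⊤ : ℕ∞)) (by simp)).differentiable (by simp)) y
  have hsym : ∀ x : E2, fderiv ℝ (pd 1 f) x (EuclideanSpace.single 0 1) =
      fderiv ℝ (pd 0 f) x (EuclideanSpace.single 1 1) := by
    intro x
    have h1 : pd 1 f = fun y => (fderiv ℝ f y) (EuclideanSpace.single 1 1) := rfl
    have h0 : pd 0 f = fun y => (fderiv ℝ f y) (EuclideanSpace.single 0 1) := rfl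
    rw [h1, h0, fderiv_clm_apply (hdf x) (differentiableAt_const _),
      fderiv_clm_apply (hdf x) (differentiableAt_const _)]
    simp only [fderiv_const, fderiv_fun_const, Pi.zero_apply, ContinuousLinearMap.comp_zero, zero_add,
      ContinuousLinearMap.add_apply, ContinuousLinearMap.flip_apply]
    exact second_derivative_symmetric
      (fun y => ((hf.differentiable (by simp)) y).hasFDerivAt) (hdf x).hasFDerivAt _ _
  have IBP : ∀ (i j : Fin 2), ∫ x, pd i f x * pd j g x =
      - ∫ x, fderiv ℝ (pd i f) x (EuclideanSpace.single j 1) * g x := by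
    intro i j
    have hpf := pd_smooth i hf
    exact integral_mul_fderiv_eq_neg_fderiv_mul_of_integrable
      (integ_mul ((pd_smooth i hf).continuous_fderiv (by simp) |>.clm_apply continuous_const)
        (hg.continuous) hgs)
      (integ_mul (pd_cont i hf) (pd_cont j hg) (pd_supp j hgs))
      (integ_mul (pd_cont i hf) hg.continuous hgs)
      (fun x _ => hpf.differentiable (by simp) x) (fun x _ => hg.differentiable (by simp) x)
  rw [IBP 1 0, IBP 0 1]
  congr 1
  exact integral_congr_ae (Filter.Eventually.of_forall fun x => by simp only [hsym x])

theorem stmt_16 (v : E2 → E2) (hv : ContDiff ℝ (⊤ : ℕ∞) v) (hvsupp : HasCompactSupport v) :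
    ∫ x : E2, ((pd 0 (fun y => v y 0) x) ^ 2 + (pd 1 (fun y => v y 0) x) ^ 2 +
        ((pd 0 (fun y => v y 1) x) ^ 2 + (pd 1 (fun y => v y 1) x) ^ 2)) ≤
      2 * ∫ x : E2, ((pd 0 (fun y => v y 0) x) ^ 2 + (pd 1 (fun y => v y 1) x) ^ 2 +
        (pd 1 (fun y => v y 0) x + pd 0 (fun y => v y 1) x) ^ 2) := by
  set f₁ : E2 → ℝ := fun y => v y 0 with hf₁def
  set f₂ : E2 → ℝ := fun y => v y 1 with hf₂def
  have hf₁ : ContDiff ℝ (⊤ : ℕ∞) f₁ := contDiff_euclidean.mp hv 0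
  have hf₂ : ContDiff ℝ (⊤ : ℕ∞) f₂ := contDiff_euclidean.mp hv 1
  have hs₁ : HasCompactSupport f₁ := hvsupp.comp_left (g := fun w : E2 => w 0) rfl
  have hs₂ : HasCompactSupport f₂ := hvsupp.comp_left (g := fun w : E2 => w 1) rfl
  set a := pd 0 f₁ with ha
  set c := pd 1 f₁ with hc
  set d := pd 0 f₂ with hd
  set b := pd 1 f₂ with hb
  have hca : Continuous a := pd_cont 0 hf₁
  have hcc : Continuous c := pd_cont 1 hf₁
  have hcd : Continuous d := pd_cont 0 hf₂
  have hcb : Continuous b := pd_cont 1 hf₂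
  have hsa : HasCompactSupport a := pd_supp 0 hs₁
  have hsc : HasCompactSupport c := pd_supp 1 hs₁
  have hsd : HasCompactSupport d := pd_supp 0 hs₂
  have hsb : HasCompactSupport b := pd_supp 1 hs₂
  -- integrabilities
  have hIL : Integrable (fun x => a x ^ 2 + c x ^ 2 + (d x ^ 2 + b x ^ 2)) := by
    have : Continuous (fun x => a x ^ 2 + c x ^ 2 + (d x ^ 2 + b x ^ 2)) := by continuity
    have h2a : HasCompactSupport (fun x => a x ^ 2) := by
      simpa [pow_two, Pi.mul_def] using hsa.mul_left (f' := a)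
    have h2c : HasCompactSupport (fun x => c x ^ 2) := by
      simpa [pow_two, Pi.mul_def] using hsc.mul_left (f' := c)
    have h2d : HasCompactSupport (fun x => d x ^ 2) := by
      simpa [pow_two, Pi.mul_def] using hsd.mul_left (f' := d)
    have h2b : HasCompactSupport (fun x => b x ^ 2) := by
      simpa [pow_two, Pi.mul_def] using hsb.mul_left (f' := b)
    exact this.integrable_of_hasCompactSupport ((h2a.add h2c).add (h2d.add h2b))
  have hIS : Integrable (fun x => (a x + b x) ^ 2 + (c x + d x) ^ 2) := by
    have hc1 : Continuous (fun x => (a x + b x) ^ 2 + (c x + d x) ^ 2) := by continuity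
    refine hc1.integrable_of_hasCompactSupport ?_
    refine HasCompactSupport.add ?_ ?_
    · have : HasCompactSupport (fun x => a x + b x) := hsa.add hsb
      simpa [pow_two, Pi.mul_def] using this.mul_left (f' := fun x => a x + b x)
    · have : HasCompactSupport (fun x => c x + d x) := hsc.add hsd
      simpa [pow_two, Pi.mul_def] using this.mul_left (f' := fun x => c x + d x)
  have hIab : Integrable (fun x => a x * b x) := integ_mul hca hcb hsb
  have hIcd : Integrable (fun x => c x * d x) := integ_mul hcc hcd hsd
  -- key identity from double integration by parts
  have hk : ∫ x, c x * d x = ∫ x, a x * b x := pd_comm_integral hf₁ hf₂ hs₁ hs₂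
  -- main computation
  have key : (2 : ℝ) * ∫ x, (a x ^ 2 + b x ^ 2 + (c x + d x) ^ 2) =
      (∫ x, (a x ^ 2 + c x ^ 2 + (d x ^ 2 + b x ^ 2))) +
        ∫ x, ((a x + b x) ^ 2 + (c x + d x) ^ 2) := by
    rw [← integral_const_mul]
    have e1 : ∀ x : E2, 2 * (a x ^ 2 + b x ^ 2 + (c x + d x) ^ 2) =
        (a x ^ 2 + c x ^ 2 + (d x ^ 2 + b x ^ 2)) + ((a x + b x) ^ 2 + (c x + d x) ^ 2)
          - 2 * (a x * b x) + 2 * (c x * d x) := fun x => by ring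
    rw [integral_congr_ae (Filter.Eventually.of_forall e1)]
    have h1 : Integrable (fun x => a x ^ 2 + c x ^ 2 + (d x ^ 2 + b x ^ 2) +
        ((a x + b x) ^ 2 + (c x + d x) ^ 2)) := hIL.add hIS
    have h2 : Integrable (fun x => a x ^ 2 + c x ^ 2 + (d x ^ 2 + b x ^ 2) +
        ((a x + b x) ^ 2 + (c x + d x) ^ 2) - 2 * (a x * b x)) := h1.sub (hIab.const_mul 2)
    rw [integral_add h2 (hIcd.const_mul 2), integral_sub h1 (hIab.const_mul 2),
      integral_add hIL hIS, integral_const_mul, integral_const_mul, hk]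
    ring
  have hSnn : 0 ≤ ∫ x, ((a x + b x) ^ 2 + (c x + d x) ^ 2) :=
    integral_nonneg fun x => by positivity
  linarith [key]
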